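/- arXiv:2308.14929 — 2 statements merged into one kernel-verified Lean document; each statement's English description precedes it below -/
import Mathlib

section
/- Let m = n, A = I_n, let μ be a probability measure on ℝ^n with ∫‖x‖² dμ(x) < ∞, and suppose the covariance matrix K = ∫ x xᵀ dμ(x) has distinct positive eigenvalues λ₁ > λ₂ > … > λ_n > 0 with corresponding orthonormal eigenvectors q₁,…,q_n. Let p₁,…,p_n > 0 with ∑_b p_b = 1. Then every global minimizer (U,V) ∈ ℝ^{n×n} × ℝ^{n×n} of F(U,V) = ∫ ∑_{b=1}^n p_b ‖U_{:b}V_{:b}ᵀ x − x‖² dμ(x) satisfies U_{:b}V_{:b}ᵀ = ∑_{i=1}^b q_i q_iᵀ for every b ∈ {1,…,n} (the orthogonal projection onto the span of the top b eigenvectors of K), and the minimum value of F equals ∑_{b=1}^n p_b ∑_{i=b+1}^n λ_i. In particular, for the identity mapping the objective is minimized exactly by the principal component decomposition (PCA) of the data. -/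
open Matrix MeasureTheory

noncomputable section

/-- Squared Euclidean norm of a vector in `ℝ^m`. -/
def sqNorm {m : ℕ} (v : Fin m → ℝ) : ℝ := ∑ i, v i ^ 2

/-- `lrProd b U V = U_{:b} V_{:b}ᵀ`, the product of the submatrices consisting of the
first `b` columns of `U` and of `V`. -/
def lrProd {m n r : ℕ} (b : ℕ) (U : Matrix (Fin m) (Fin r) ℝ)
    (V : Matrix (Fin n) (Fin r) ℝ) : Matrix (Fin m) (Fin n) ℝ :=
  Matrix.of fun i j => ∑ t : Fin r, if (t : ℕ) < b then U i t * V j t else 0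

/-- `F(U,V) = ∫ ∑_{b=1}^n p_b ‖U_{:b}V_{:b}ᵀ x − x‖² dμ(x)` (the case `A = I_n`).
(The index `b : Fin n` stands for the 1-indexed truncation level `b+1 ∈ {1,…,n}`.) -/
def idMapObj {n : ℕ} (μ : Measure (Fin n → ℝ)) (p : Fin n → ℝ)
    (U V : Matrix (Fin n) (Fin n) ℝ) : ℝ :=
  ∫ x, ∑ b : Fin n, p b * sqNorm ((lrProd ((b : ℕ) + 1) U V).mulVec x - x) ∂μ

namespace Stmt8Aux

open RealInnerProductSpace

variable {n : ℕ}

lemma sqNorm_eq (v : EuclideanSpace ℝ (Fin n)) : sqNorm (fun i => v i) = ‖v‖ ^ 2 := by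
  rw [PiLp.norm_sq_eq_of_L2]
  simp [sqNorm]

def dk (n k : ℕ) : Matrix (Fin n) (Fin n) ℝ :=
  Matrix.diagonal fun t => if (t : ℕ) < k then 1 else 0

lemma card_filter_lt (k : ℕ) (hk : k ≤ n) :
    (Finset.univ.filter fun t : Fin n => (t : ℕ) < k).card = k := by
  have : (Finset.univ.filter fun t : Fin n => (t : ℕ) < k)
      = Finset.map (Fin.castLEEmb hk) Finset.univ := by
    ext j
    simp only [Finset.mem_filter, Finset.mem_univ, true_and, Finset.mem_map]
    constructor
    · intro h; exact ⟨⟨j, h⟩, rfl⟩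
    · rintro ⟨t, rfl⟩; exact t.isLt
  rw [this, Finset.card_map, Finset.card_univ, Fintype.card_fin]

lemma sum_ite_lt (k : ℕ) (hk : k ≤ n) :
    (∑ j : Fin n, if (j : ℕ) < k then (1 : ℝ) else 0) = k := by
  rw [Finset.sum_ite, Finset.sum_const, Finset.sum_const]
  simp [card_filter_lt k hk]

lemma kyfan (k : ℕ) (hk : k ≤ n) (lam : Fin n → ℝ)
    (hpos : ∀ i, 0 < lam i) (hstrict : ∀ i j : Fin n, i < j → lam j < lam i)
    (s : Fin n → ℝ) (h0 : ∀ j, 0 ≤ s j) (h1 : ∀ j, s j ≤ 1)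
    (hsum : ∑ j, s j ≤ (k : ℝ)) :
    (∑ j, lam j * s j ≤ ∑ j : Fin n, if (j : ℕ) < k then lam j else 0) ∧
      (∑ j, lam j * s j = (∑ j : Fin n, if (j : ℕ) < k then lam j else 0) →
        ∀ j : Fin n, s j = if (j : ℕ) < k then 1 else 0) := by
  set c : ℝ := if h : k < n then lam ⟨k, h⟩ else 0 with hc
  have hc0 : 0 ≤ c := by
    rw [hc]; split_ifs with h
    · exact (hpos _).le
    · exact le_refl _
  have hlt : ∀ j : Fin n, (j : ℕ) < k → c < lam j := by
    intro j hj
    rw [hc]; split_ifs with h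
    · exact hstrict j ⟨k, h⟩ hj
    · exact hpos j
  have hge : ∀ j : Fin n, k ≤ (j : ℕ) → lam j ≤ c := by
    intro j hj
    have h : k < n := lt_of_le_of_lt hj j.isLt
    rw [hc, dif_pos h]
    rcases eq_or_lt_of_le hj with h' | h'
    · exact le_of_eq (congrArg lam (Fin.ext h'.symm))
    · exact (hstrict ⟨k, h⟩ j h').le
  -- termwise bound
  have hterm : ∀ j : Fin n,
      (if (j : ℕ) < k then c * (1 - s j) else c * (-s j)) ≤
        (if (j : ℕ) < k then lam j else 0) - lam j * s j := by
    intro j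
    split_ifs with h
    · have := (hlt j h).le
      nlinarith [h1 j]
    · have := hge j (le_of_not_gt h)
      nlinarith [h0 j]
  have hsumlhs : (∑ j : Fin n, if (j : ℕ) < k then c * (1 - s j) else c * (-s j))
      = c * ((k : ℝ) - ∑ j, s j) := by
    have : ∀ j : Fin n, (if (j : ℕ) < k then c * (1 - s j) else c * (-s j))
        = c * (if (j : ℕ) < k then (1:ℝ) else 0) - c * s j := by
      intro j; split_ifs <;> ring
    rw [Finset.sum_congr rfl fun j _ => this j, Finset.sum_sub_distrib, ← Finset.mul_sum,
      ← Finset.mul_sum, sum_ite_lt k hk]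
    ring
  have hkey : 0 ≤ (∑ j : Fin n, if (j : ℕ) < k then lam j else 0) - ∑ j, lam j * s j := by
    have h1' : c * ((k : ℝ) - ∑ j, s j) ≤
        ∑ j : Fin n, ((if (j : ℕ) < k then lam j else 0) - lam j * s j) := by
      rw [← hsumlhs]; exact Finset.sum_le_sum fun j _ => hterm j
    have h2' : 0 ≤ c * ((k : ℝ) - ∑ j, s j) := mul_nonneg hc0 (by linarith)
    rw [Finset.sum_sub_distrib] at h1'
    linarith
  constructor
  · linarith
  · intro heq
    -- first: s j = 1 for j < k
    have hzero : ∀ j : Fin n,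
        ((if (j : ℕ) < k then lam j else 0) - lam j * s j) -
          (if (j : ℕ) < k then c * (1 - s j) else c * (-s j)) = 0 := by
      have hnn : ∀ j ∈ (Finset.univ : Finset (Fin n)), 0 ≤
          ((if (j : ℕ) < k then lam j else 0) - lam j * s j) -
            (if (j : ℕ) < k then c * (1 - s j) else c * (-s j)) :=
        fun j _ => sub_nonneg.mpr (hterm j)
      have hsum0 : (∑ j : Fin n,
          (((if (j : ℕ) < k then lam j else 0) - lam j * s j) -
            (if (j : ℕ) < k then c * (1 - s j) else c * (-s j)))) ≤ 0 := by
        rw [Finset.sum_sub_distrib, hsumlhs, Finset.sum_sub_distrib, ← heq]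
        have h2' : 0 ≤ c * ((k : ℝ) - ∑ j, s j) := mul_nonneg hc0 (by linarith)
        linarith
      have := le_antisymm hsum0 (Finset.sum_nonneg hnn)
      intro j
      exact (Finset.sum_eq_zero_iff_of_nonneg hnn).mp this j (Finset.mem_univ j)
    have hone : ∀ j : Fin n, (j : ℕ) < k → s j = 1 := by
      intro j hj
      have := hzero j
      rw [if_pos hj, if_pos hj] at this
      have hlt' := hlt j hj
      have : (lam j - c) * (1 - s j) = 0 := by linarith
      rcases mul_eq_zero.mp this with h | h
      · linarith
      · linarith
    have hrest : (∑ j : Fin n, if (j : ℕ) < k then (0:ℝ) else lam j * s j) = 0 := by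
      have : ∀ j : Fin n, (if (j : ℕ) < k then (0:ℝ) else lam j * s j)
          = lam j * s j - (if (j : ℕ) < k then lam j else 0) := by
        intro j; split_ifs with h
        · rw [hone j h]; ring
        · ring
      rw [Finset.sum_congr rfl fun j _ => this j, Finset.sum_sub_distrib, heq, sub_self]
    have hzero2 := (Finset.sum_eq_zero_iff_of_nonneg (fun j _ => by
      split_ifs with h
      · exact le_refl 0
      · exact mul_nonneg (hpos j).le (h0 j))).mp hrest
    intro j
    split_ifs with h
    · exact hone j h
    · have := hzero2 j (Finset.mem_univ j)
      rw [if_neg h] at this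
      have := mul_eq_zero.mp this
      rcases this with h' | h'
      · exact absurd h' (ne_of_gt (hpos j))
      · exact h'

lemma lam_split (k : ℕ) (lam : Fin n → ℝ) :
    (∑ j : Fin n, lam j) = (∑ j : Fin n, if (j : ℕ) < k then lam j else 0)
      + ∑ j : Fin n, if k ≤ (j : ℕ) then lam j else 0 := by
  rw [← Finset.sum_add_distrib]
  apply Finset.sum_congr rfl
  intro j _
  split_ifs with h1 h2 <;> first | omega | ring

set_option maxHeartbeats 2000000 in
lemma core (k : ℕ) (hk : k ≤ n) (lam : Fin n → ℝ)
    (hpos : ∀ i, 0 < lam i) (hstrict : ∀ i j : Fin n, i < j → lam j < lam i)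
    (U V : Matrix (Fin n) (Fin n) ℝ) :
    ((∑ j : Fin n, if k ≤ (j : ℕ) then lam j else 0) ≤
        ∑ j : Fin n, lam j * sqNorm (fun i => (U * dk n k * Vᵀ) i j - if i = j then 1 else 0)) ∧
      ((∑ j : Fin n, lam j * sqNorm (fun i => (U * dk n k * Vᵀ) i j - if i = j then 1 else 0))
          = (∑ j : Fin n, if k ≤ (j : ℕ) then lam j else 0) →
        U * dk n k * Vᵀ = dk n k) := by
  classical
  set N : Matrix (Fin n) (Fin n) ℝ := U * dk n k * Vᵀ with hN
  set u : Fin n → EuclideanSpace ℝ (Fin n) := fun t => WithLp.toLp 2 (fun i => U i t : Fin n → ℝ) with hu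
  set S : Submodule ℝ (EuclideanSpace ℝ (Fin n)) := Submodule.span ℝ
    (((Finset.univ.filter fun t : Fin n => (t : ℕ) < k).image u :
      Finset (EuclideanSpace ℝ (Fin n))) : Set (EuclideanSpace ℝ (Fin n))) with hS
  have hNcol : ∀ j i, N i j = ∑ t ∈ Finset.univ.filter (fun t : Fin n => (t : ℕ) < k),
      V j t * U i t := by
    intro j i
    rw [hN, Matrix.mul_apply, Finset.sum_filter]
    apply Finset.sum_congr rfl
    intro t _
    simp only [dk, Matrix.mul_diagonal, Matrix.transpose_apply]
    split_ifs <;> ring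
  set col : Fin n → EuclideanSpace ℝ (Fin n) := fun j => WithLp.toLp 2 (fun i => N i j : Fin n → ℝ) with hcol
  have hcolmem : ∀ j : Fin n, col j ∈ S := by
    intro j
    have heq : col j
        = ∑ t ∈ Finset.univ.filter (fun t : Fin n => (t : ℕ) < k), V j t • u t := by
      apply (WithLp.linearEquiv 2 ℝ (Fin n → ℝ)).injective
      rw [map_sum]
      funext i
      rw [Finset.sum_apply]
      simp only [WithLp.coe_linearEquiv]
      show N i j = _
      rw [hNcol j i]
      apply Finset.sum_congr rfl
      intro t ht
      rw [PiLp.smul_apply, smul_eq_mul]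
    rw [heq]
    exact Submodule.sum_smul_mem _ _ fun t ht =>
      Submodule.subset_span (Finset.mem_coe.mpr (Finset.mem_image_of_mem u ht))
  have hrankS : Module.finrank ℝ S ≤ k := by
    refine le_trans (finrank_span_finset_le_card _) (le_trans (Finset.card_image_le) ?_)
    rw [card_filter_lt k hk]
  set e : Fin n → EuclideanSpace ℝ (Fin n) := fun j => EuclideanSpace.single j (1 : ℝ) with he
  set pe : Fin n → EuclideanSpace ℝ (Fin n) :=
    fun j => (Submodule.orthogonalProjectionOnto S (e j) : EuclideanSpace ℝ (Fin n)) with hpe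
  set s : Fin n → ℝ := fun j => ‖pe j‖ ^ 2 with hsdef
  have hperp : ∀ (j : Fin n) (w : EuclideanSpace ℝ (Fin n)), w ∈ S → ⟪e j - pe j, w⟫ = 0 := by
    intro j w hw
    exact Submodule.starProjection_inner_eq_zero (e j) w hw
  have hnorme : ∀ j, ‖e j‖ = 1 := by
    intro j; rw [he]; simp [EuclideanSpace.norm_single]
  have hpyth : ∀ j, ‖e j - pe j‖ ^ 2 = 1 - s j := by
    intro j
    have h0 : ⟪pe j, e j - pe j⟫ = 0 := by
      rw [real_inner_comm]
      exact hperp j (pe j) (Submodule.orthogonalProjectionOnto _ (e j)).2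
    have := norm_add_sq_real (pe j) (e j - pe j)
    rw [h0] at this
    have h2 : pe j + (e j - pe j) = e j := by abel
    rw [h2, hnorme j] at this
    show ‖e j - pe j‖ ^ 2 = 1 - ‖pe j‖ ^ 2
    nlinarith [this]
  have hs0 : ∀ j, 0 ≤ s j := fun j => sq_nonneg _
  have hs1 : ∀ j, s j ≤ 1 := by
    intro j
    have := hpyth j
    nlinarith [sq_nonneg ‖e j - pe j‖]
  have hsum : (∑ j, s j) ≤ (k : ℝ) := by
    set b := stdOrthonormalBasis ℝ S with hb
    have hpe_sum : ∀ j, pe j = ∑ t, ⟪(b t : EuclideanSpace ℝ (Fin n)), e j⟫ •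
        (b t : EuclideanSpace ℝ (Fin n)) := by
      intro j
      show ((Submodule.orthogonalProjectionOnto S (e j) : S) : EuclideanSpace ℝ (Fin n)) = _
      rw [OrthonormalBasis.orthogonalProjectionOnto_apply_eq_sum b (e j)]
      push_cast
      rfl
    have hs_eq : ∀ j, s j = ∑ t, ⟪(b t : EuclideanSpace ℝ (Fin n)), e j⟫ ^ 2 := by
      intro j
      have h1' : ⟪e j - pe j, pe j⟫ = 0 := hperp j (pe j) (Submodule.orthogonalProjectionOnto S (e j)).2
      rw [inner_sub_left] at h1'
      have h2' : s j = ⟪e j, pe j⟫ := by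
        show ‖pe j‖ ^ 2 = _
        rw [← real_inner_self_eq_norm_sq]
        linarith [h1']
      rw [h2', hpe_sum j, inner_sum]
      apply Finset.sum_congr rfl
      intro t _
      rw [real_inner_smul_right, real_inner_comm]
      ring
    have hbs : ∀ t, (∑ j, ⟪(b t : EuclideanSpace ℝ (Fin n)), e j⟫ ^ 2) = 1 := by
      intro t
      have : ∀ j, ⟪(b t : EuclideanSpace ℝ (Fin n)), e j⟫
          = (b t : EuclideanSpace ℝ (Fin n)) j := by
        intro j
        rw [real_inner_comm]
        show ⟪EuclideanSpace.single j (1:ℝ), (b t : EuclideanSpace ℝ (Fin n))⟫ = _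
        rw [EuclideanSpace.inner_single_left]
        simp
      rw [Finset.sum_congr rfl fun j _ => by rw [this j]]
      have hn1 : ‖(b t : EuclideanSpace ℝ (Fin n))‖ = 1 := by
        exact b.orthonormal.1 t
      have := sqNorm_eq (b t : EuclideanSpace ℝ (Fin n))
      rw [hn1] at this
      simpa [sqNorm] using this
    calc (∑ j, s j) = ∑ j, ∑ t, ⟪(b t : EuclideanSpace ℝ (Fin n)), e j⟫ ^ 2 :=
          Finset.sum_congr rfl fun j _ => hs_eq j
      _ = ∑ t, ∑ j, ⟪(b t : EuclideanSpace ℝ (Fin n)), e j⟫ ^ 2 := Finset.sum_comm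
      _ = ∑ _t : Fin (Module.finrank ℝ S), (1:ℝ) := Finset.sum_congr rfl fun t _ => hbs t
      _ = (Module.finrank ℝ S : ℝ) := by simp
      _ ≤ (k : ℝ) := by exact_mod_cast hrankS
  have hlow_j : ∀ j, sqNorm (fun i => N i j - if i = j then 1 else 0)
      = ‖col j - pe j‖ ^ 2 + (1 - s j) := by
    intro j
    have hfe : ((fun i => N i j - if i = j then 1 else 0) : Fin n → ℝ)
        = fun i => (col j - e j) i := by
      funext i
      rw [PiLp.sub_apply]
      congr 1
      show (if i = j then (1:ℝ) else 0) = EuclideanSpace.single j (1:ℝ) i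
      rw [EuclideanSpace.single_apply]
    rw [hfe, sqNorm_eq]
    have hsplit : col j - e j = (col j - pe j) - (e j - pe j) := by abel
    have hinner : ⟪col j - pe j, e j - pe j⟫ = 0 := by
      rw [real_inner_comm]
      exact hperp j _ (Submodule.sub_mem S (hcolmem j) (Submodule.orthogonalProjectionOnto S (e j)).2)
    rw [hsplit, norm_sub_sq_real, hinner, hpyth j]
    ring
  have hT : (∑ j, lam j * sqNorm (fun i => N i j - if i = j then 1 else 0))
      = (∑ j, lam j * ‖col j - pe j‖ ^ 2) + ∑ j, lam j * (1 - s j) := by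
    rw [← Finset.sum_add_distrib]
    apply Finset.sum_congr rfl
    intro j _
    rw [hlow_j j]
    ring
  have hA0 : 0 ≤ ∑ j, lam j * ‖col j - pe j‖ ^ 2 :=
    Finset.sum_nonneg fun j _ => mul_nonneg (hpos j).le (sq_nonneg _)
  have hky := kyfan k hk lam hpos hstrict s hs0 hs1 hsum
  have hB : (∑ j, lam j * (1 - s j)) = (∑ j, lam j) - ∑ j, lam j * s j := by
    rw [← Finset.sum_sub_distrib]
    apply Finset.sum_congr rfl
    intro j _
    ring
  have hsplitlam := lam_split k lam
  have hBge : (∑ j : Fin n, if k ≤ (j : ℕ) then lam j else 0) ≤ ∑ j, lam j * (1 - s j) := by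
    rw [hB]
    linarith [hky.1]
  constructor
  · rw [hT]
    linarith
  · intro heq
    rw [hT] at heq
    have hAeq : (∑ j, lam j * ‖col j - pe j‖ ^ 2) = 0 := by linarith
    have hBeq : (∑ j, lam j * s j) = ∑ j : Fin n, if (j : ℕ) < k then lam j else 0 := by
      have h3 : (∑ j, lam j * (1 - s j)) = ∑ j : Fin n, if k ≤ (j : ℕ) then lam j else 0 := by
        linarith
      rw [hB] at h3
      linarith
    have hspat := hky.2 hBeq
    have hcolpe : ∀ j, col j = pe j := by
      intro j
      have h4 := (Finset.sum_eq_zero_iff_of_nonneg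
        (fun j _ => mul_nonneg (hpos j).le (sq_nonneg ‖col j - pe j‖))).mp hAeq j
        (Finset.mem_univ j)
      have h5 : ‖col j - pe j‖ ^ 2 = 0 := by
        rcases mul_eq_zero.mp h4 with h | h
        · exact absurd h (ne_of_gt (hpos j))
        · exact h
      have h6 : col j - pe j = 0 := by
        rwa [pow_eq_zero_iff (by norm_num : 2 ≠ 0), norm_eq_zero] at h5
      exact sub_eq_zero.mp h6
    ext i j
    by_cases hj : (j : ℕ) < k
    · have hs_j : s j = 1 := by rw [hspat j, if_pos hj]
      have h7 : ‖e j - pe j‖ ^ 2 = 0 := by rw [hpyth j, hs_j]; ring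
      have hpe_j : e j - pe j = 0 := by
        rwa [pow_eq_zero_iff (two_ne_zero), norm_eq_zero] at h7
      have hcj : col j = e j := by
        rw [hcolpe j, ← sub_eq_zero.mp hpe_j]
      have h8 : N i j = if i = j then (1:ℝ) else 0 := by
        have h9 : col j i = e j i := congrArg (fun v : EuclideanSpace ℝ (Fin n) => v i) hcj
        have h10 : e j i = if i = j then (1:ℝ) else 0 := by
          show EuclideanSpace.single j (1:ℝ) i = _
          rw [EuclideanSpace.single_apply]
        exact h9.trans h10
      rw [h8]
      simp only [dk, Matrix.diagonal_apply]
      by_cases hij : i = j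
      · subst hij; simp [hj]
      · simp [hij]
    · have hs_j : s j = 0 := by rw [hspat j, if_neg hj]
      have h7 : ‖pe j‖ ^ 2 = 0 := hs_j
      have hpe0 : pe j = 0 := by
        rwa [pow_eq_zero_iff (two_ne_zero), norm_eq_zero] at h7
      have hcj : col j = 0 := by rw [hcolpe j, hpe0]
      have h8 : N i j = 0 := congrArg (fun v : EuclideanSpace ℝ (Fin n) => v i) hcj
      rw [h8]
      simp only [dk, Matrix.diagonal_apply]
      by_cases hij : i = j
      · subst hij; simp [hj]
      · simp [hij]

lemma integrable_quad (μ : Measure (Fin n → ℝ))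
    (hmoment : Integrable (fun x => ∑ i, x i ^ 2) μ) (j l : Fin n) :
    Integrable (fun x : Fin n → ℝ => x j * x l) μ := by
  apply hmoment.mono'
  · exact ((measurable_pi_apply j).mul (measurable_pi_apply l)).aestronglyMeasurable
  · filter_upwards with x
    rw [Real.norm_eq_abs, abs_mul]
    have h1 : x j ^ 2 ≤ ∑ i, x i ^ 2 :=
      Finset.single_le_sum (fun i _ => sq_nonneg (x i)) (Finset.mem_univ j)
    have h2 : x l ^ 2 ≤ ∑ i, x i ^ 2 :=
      Finset.single_le_sum (fun i _ => sq_nonneg (x i)) (Finset.mem_univ l)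
    nlinarith [abs_nonneg (x j), abs_nonneg (x l), sq_abs (x j), sq_abs (x l),
      sq_nonneg (|x j| - |x l|)]

lemma sqNorm_mulVec_expand (C : Matrix (Fin n) (Fin n) ℝ) (x : Fin n → ℝ) :
    sqNorm (C.mulVec x) = ∑ j, ∑ l, (∑ i, C i j * C i l) * (x j * x l) := by
  unfold sqNorm
  calc (∑ i, C.mulVec x i ^ 2)
      = ∑ i, ∑ j, ∑ l, (C i j * C i l) * (x j * x l) := by
        apply Finset.sum_congr rfl
        intro i _
        rw [Matrix.mulVec, dotProduct, sq, Finset.sum_mul_sum]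
        apply Finset.sum_congr rfl
        intro j _
        apply Finset.sum_congr rfl
        intro l _
        ring
    _ = ∑ j, ∑ i, ∑ l, (C i j * C i l) * (x j * x l) := Finset.sum_comm
    _ = ∑ j, ∑ l, ∑ i, (C i j * C i l) * (x j * x l) :=
        Finset.sum_congr rfl fun j _ => Finset.sum_comm
    _ = ∑ j, ∑ l, (∑ i, C i j * C i l) * (x j * x l) :=
        Finset.sum_congr rfl fun j _ => Finset.sum_congr rfl fun l _ =>
          (Finset.sum_mul _ _ _).symm

lemma integrable_sqNorm_mulVec (μ : Measure (Fin n → ℝ))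
    (hmoment : Integrable (fun x => ∑ i, x i ^ 2) μ) (C : Matrix (Fin n) (Fin n) ℝ) :
    Integrable (fun x => sqNorm (C.mulVec x)) μ := by
  have : (fun x : Fin n → ℝ => sqNorm (C.mulVec x))
      = fun x => ∑ j, ∑ l, (∑ i, C i j * C i l) * (x j * x l) := by
    funext x; exact sqNorm_mulVec_expand C x
  rw [this]
  apply integrable_finset_sum
  intro j _
  apply integrable_finset_sum
  intro l _
  exact (integrable_quad μ hmoment j l).const_mul _

lemma integral_sqNorm_mulVec (μ : Measure (Fin n → ℝ)) [IsProbabilityMeasure μ]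
    (hmoment : Integrable (fun x => ∑ i, x i ^ 2) μ)
    (lam : Fin n → ℝ) (q : Fin n → Fin n → ℝ)
    (hK : (Matrix.of fun i j : Fin n => ∫ x, x i * x j ∂μ) =
      ∑ i : Fin n, lam i • Matrix.vecMulVec (q i) (q i))
    (C : Matrix (Fin n) (Fin n) ℝ) :
    ∫ x, sqNorm (C.mulVec x) ∂μ = ∑ t, lam t * sqNorm (C.mulVec (q t)) := by
  have hKe : ∀ j l : Fin n, (∫ x, x j * x l ∂μ) = ∑ t, lam t * (q t j * q t l) := by
    intro j l
    have := congrFun (congrFun hK j) l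
    simpa [Matrix.sum_apply, Matrix.vecMulVec_apply, mul_assoc] using this
  calc (∫ x, sqNorm (C.mulVec x) ∂μ)
      = ∫ x, ∑ j, ∑ l, (∑ i, C i j * C i l) * (x j * x l) ∂μ := by
        apply integral_congr_ae
        filter_upwards with x
        exact sqNorm_mulVec_expand C x
    _ = ∑ j, ∑ l, (∑ i, C i j * C i l) * ∫ x, x j * x l ∂μ := by
        rw [integral_finset_sum _ fun j _ => integrable_finset_sum _
          fun l _ => (integrable_quad μ hmoment j l).const_mul _]
        apply Finset.sum_congr rfl
        intro j _
        rw [integral_finset_sum _ fun l _ => (integrable_quad μ hmoment j l).const_mul _]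
        apply Finset.sum_congr rfl
        intro l _
        exact integral_const_mul _ _
    _ = ∑ j, ∑ l, ∑ t, lam t * ((∑ i, C i j * C i l) * (q t j * q t l)) := by
        apply Finset.sum_congr rfl
        intro j _
        apply Finset.sum_congr rfl
        intro l _
        rw [hKe j l, Finset.mul_sum]
        apply Finset.sum_congr rfl
        intro t _
        ring
    _ = ∑ j, ∑ t, ∑ l, lam t * ((∑ i, C i j * C i l) * (q t j * q t l)) :=
        Finset.sum_congr rfl fun j _ => Finset.sum_comm
    _ = ∑ t, ∑ j, ∑ l, lam t * ((∑ i, C i j * C i l) * (q t j * q t l)) :=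
        Finset.sum_comm
    _ = ∑ t, lam t * sqNorm (C.mulVec (q t)) := by
        apply Finset.sum_congr rfl
        intro t _
        rw [sqNorm_mulVec_expand C (q t), Finset.mul_sum]
        apply Finset.sum_congr rfl
        intro j _
        rw [Finset.mul_sum]

lemma lrProd_eq (k : ℕ) (U V : Matrix (Fin n) (Fin n) ℝ) :
    lrProd k U V = U * dk n k * Vᵀ := by
  ext i j
  rw [Matrix.mul_apply]
  show (∑ t : Fin n, if (t : ℕ) < k then U i t * V j t else 0) = _
  apply Finset.sum_congr rfl
  intro t _
  simp only [dk, Matrix.mul_diagonal, Matrix.transpose_apply]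
  split_ifs <;> ring

lemma parseval (q : Fin n → Fin n → ℝ)
    (hqcol : ∀ s t : Fin n, (∑ i, q i s * q i t) = if s = t then (1:ℝ) else 0)
    (v : Fin n → ℝ) : ∑ i, (∑ s, q i s * v s) ^ 2 = ∑ s, v s ^ 2 := by
  calc (∑ i, (∑ s, q i s * v s) ^ 2)
      = ∑ i, ∑ s, ∑ t, (q i s * q i t) * (v s * v t) := by
        apply Finset.sum_congr rfl
        intro i _
        rw [sq, Finset.sum_mul_sum]
        exact Finset.sum_congr rfl fun s _ => Finset.sum_congr rfl fun t _ => by ring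
    _ = ∑ s, ∑ i, ∑ t, (q i s * q i t) * (v s * v t) := Finset.sum_comm
    _ = ∑ s, ∑ t, ∑ i, (q i s * q i t) * (v s * v t) :=
        Finset.sum_congr rfl fun s _ => Finset.sum_comm
    _ = ∑ s, ∑ t, (if s = t then (1:ℝ) else 0) * (v s * v t) := by
        apply Finset.sum_congr rfl
        intro s _
        apply Finset.sum_congr rfl
        intro t _
        rw [← Finset.sum_mul, hqcol s t]
    _ = ∑ s, v s ^ 2 := by
        apply Finset.sum_congr rfl
        intro s _
        have : ∀ t, (if s = t then (1:ℝ) else 0) * (v s * v t)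
            = if s = t then v s * v t else 0 := by
          intro t; split_ifs <;> ring
        rw [Finset.sum_congr rfl fun t _ => this t, Finset.sum_ite_eq]
        simp [sq]

lemma sqNorm_basis (q : Fin n → Fin n → ℝ)
    (hq : ∀ i j : Fin n, (∑ t, q i t * q j t) = if i = j then (1:ℝ) else 0)
    (hqcol : ∀ s t : Fin n, (∑ i, q i s * q i t) = if s = t then (1:ℝ) else 0)
    (M : Matrix (Fin n) (Fin n) ℝ) (j : Fin n) :
    sqNorm ((M - 1).mulVec (q j))
      = sqNorm (fun i => ((Matrix.of q) * M * (Matrix.of q)ᵀ) i j - if i = j then 1 else 0) := by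
  have key : ∀ i, ((Matrix.of q) * M * (Matrix.of q)ᵀ) i j - (if i = j then (1:ℝ) else 0)
      = ∑ s, q i s * ((M - 1).mulVec (q j) s) := by
    intro i
    have h1 : (∑ s, q i s * ((M - 1).mulVec (q j) s))
        = (∑ s, q i s * (M.mulVec (q j) s)) - ∑ s, q i s * q j s := by
      rw [← Finset.sum_sub_distrib]
      apply Finset.sum_congr rfl
      intro s _
      rw [Matrix.sub_mulVec, Pi.sub_apply, Matrix.one_mulVec]
      ring
    have h2 : (∑ s, q i s * (M.mulVec (q j) s)) = ((Matrix.of q) * M * (Matrix.of q)ᵀ) i j := by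
      rw [Matrix.mul_apply]
      calc (∑ s, q i s * (M.mulVec (q j) s))
          = ∑ s, ∑ t, q i s * (M s t * q j t) := by
            apply Finset.sum_congr rfl
            intro s _
            rw [Matrix.mulVec, dotProduct, Finset.mul_sum]
        _ = ∑ t, ∑ s, q i s * (M s t * q j t) := Finset.sum_comm
        _ = ∑ t, ((Matrix.of q) * M) i t * (Matrix.of q)ᵀ t j := by
            apply Finset.sum_congr rfl
            intro t _
            rw [Matrix.mul_apply, Matrix.transpose_apply, Finset.sum_mul]
            apply Finset.sum_congr rfl
            intro s _
            show q i s * (M s t * q j t) = q i s * M s t * q j t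
            ring
    rw [h1, h2, hq i j]
  unfold sqNorm
  rw [← parseval q hqcol ((M - 1).mulVec (q j))]
  apply Finset.sum_congr rfl
  intro i _
  rw [show ((fun i => (Matrix.of q * M * (Matrix.of q)ᵀ) i j - if i = j then (1:ℝ) else 0) i)
    = (Matrix.of q * M * (Matrix.of q)ᵀ) i j - (if i = j then (1:ℝ) else 0) from rfl, key i]


end Stmt8Aux

open Stmt8Aux in
/-- Let `m = n`, `A = I_n`, `μ` a probability measure on `ℝ^n` with finite
second moment whose covariance matrix `K = ∫ x xᵀ dμ` has distinct positive eigenvalues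
`λ₁ > … > λ_n > 0` with orthonormal eigenvectors `q₁,…,q_n`, and let `p_b > 0` with
`∑ p_b = 1`. Then every global minimizer `(U,V)` of
`F(U,V) = ∫ ∑_b p_b ‖U_{:b}V_{:b}ᵀ x − x‖² dμ` satisfies
`U_{:b}V_{:b}ᵀ = ∑_{i=1}^b q_i q_iᵀ` for every `b ∈ {1,…,n}`, and the minimum value of
`F` equals `∑_{b=1}^n p_b ∑_{i=b+1}^n λ_i`. -/
theorem stmt8 {n : ℕ} (μ : Measure (Fin n → ℝ)) [IsProbabilityMeasure μ]
    (hmoment : Integrable (fun x => ∑ i, x i ^ 2) μ)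
    (lam : Fin n → ℝ) (q : Fin n → Fin n → ℝ)
    (hlampos : ∀ i, 0 < lam i)
    (hlamstrict : ∀ i j : Fin n, i < j → lam j < lam i)
    (hq : ∀ i j : Fin n, (∑ t, q i t * q j t) = if i = j then (1 : ℝ) else 0)
    (hK : (Matrix.of fun i j : Fin n => ∫ x, x i * x j ∂μ) =
      ∑ i : Fin n, lam i • Matrix.vecMulVec (q i) (q i))
    (p : Fin n → ℝ) (hp : ∀ b, 0 < p b) (hpsum : ∑ b, p b = 1) :
    (∀ U V : Matrix (Fin n) (Fin n) ℝ,
      (∀ U' V' : Matrix (Fin n) (Fin n) ℝ, idMapObj μ p U V ≤ idMapObj μ p U' V') →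
      ∀ b : Fin n, lrProd ((b : ℕ) + 1) U V =
        ∑ i : Fin n, if (i : ℕ) < (b : ℕ) + 1 then Matrix.vecMulVec (q i) (q i) else 0) ∧
    IsLeast {y : ℝ | ∃ U V : Matrix (Fin n) (Fin n) ℝ, idMapObj μ p U V = y}
      (∑ b : Fin n, p b * ∑ i : Fin n, if (b : ℕ) + 1 ≤ (i : ℕ) then lam i else 0) := by
  classical
  set Q : Matrix (Fin n) (Fin n) ℝ := Matrix.of q with hQdef
  have hQQt : Q * Qᵀ = 1 := by
    ext i j
    rw [Matrix.mul_apply]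
    rw [show (∑ t, Q i t * Qᵀ t j) = ∑ t, q i t * q j t from rfl, hq i j, Matrix.one_apply]
  have hQtQ : Qᵀ * Q = 1 := mul_eq_one_comm.mp hQQt
  have hqcol : ∀ s t : Fin n, (∑ i, q i s * q i t) = if s = t then (1:ℝ) else 0 := by
    intro s t
    have h := congrFun (congrFun hQtQ s) t
    rw [Matrix.mul_apply] at h
    rw [show (∑ i, Qᵀ s i * Q i t) = ∑ i, q i s * q i t from rfl] at h
    rw [h, Matrix.one_apply]
  have hfun : ∀ (M : Matrix (Fin n) (Fin n) ℝ) (x : Fin n → ℝ),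
      M.mulVec x - x = (M - 1).mulVec x := by
    intro M x
    rw [Matrix.sub_mulVec, Matrix.one_mulVec]
  have hTk : ∀ k : ℕ, Qᵀ * dk n k * Q
      = ∑ i : Fin n, if (i : ℕ) < k then Matrix.vecMulVec (q i) (q i) else 0 := by
    intro k
    ext s t
    rw [Matrix.mul_apply, Matrix.sum_apply]
    have h1 : ∀ i : Fin n, (Qᵀ * dk n k) s i * Q i t
        = (if (i : ℕ) < k then q i s * q i t else 0) := by
      intro i
      simp only [dk, Matrix.mul_diagonal, Matrix.transpose_apply, hQdef, Matrix.of_apply]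
      split_ifs <;> ring
    rw [Finset.sum_congr rfl fun i _ => h1 i]
    apply Finset.sum_congr rfl
    intro i _
    split_ifs with h
    · rw [Matrix.vecMulVec_apply]
    · rw [Matrix.zero_apply]
  have hgval : ∀ (k : ℕ) (U V : Matrix (Fin n) (Fin n) ℝ),
      (∫ x, sqNorm ((lrProd k U V).mulVec x - x) ∂μ)
        = ∑ j, lam j * sqNorm (fun i => ((Q * U) * dk n k * (Q * V)ᵀ) i j
            - if i = j then 1 else 0) := by
    intro k U V
    have h1 : (∫ x, sqNorm ((lrProd k U V).mulVec x - x) ∂μ)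
        = ∫ x, sqNorm ((lrProd k U V - 1).mulVec x) ∂μ := by
      apply integral_congr_ae
      filter_upwards with x
      rw [hfun]
    rw [h1, integral_sqNorm_mulVec μ hmoment lam q hK]
    have h2 : Q * lrProd k U V * Qᵀ = (Q * U) * dk n k * (Q * V)ᵀ := by
      rw [lrProd_eq]
      simp only [Matrix.transpose_mul, Matrix.mul_assoc]
    apply Finset.sum_congr rfl
    intro j _
    rw [sqNorm_basis q hq hqcol (lrProd k U V) j, ← hQdef, h2]
  have hLbound : ∀ (k : ℕ), k ≤ n → ∀ U V : Matrix (Fin n) (Fin n) ℝ,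
      (∑ j : Fin n, if k ≤ (j : ℕ) then lam j else 0)
        ≤ ∫ x, sqNorm ((lrProd k U V).mulVec x - x) ∂μ := by
    intro k hk U V
    rw [hgval k U V]
    exact (core k hk lam hlampos hlamstrict (Q * U) (Q * V)).1
  have hEqCase : ∀ (k : ℕ), k ≤ n → ∀ U V : Matrix (Fin n) (Fin n) ℝ,
      (∫ x, sqNorm ((lrProd k U V).mulVec x - x) ∂μ)
          = (∑ j : Fin n, if k ≤ (j : ℕ) then lam j else 0) →
      lrProd k U V = Qᵀ * dk n k * Q := by
    intro k hk U V heq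
    rw [hgval k U V] at heq
    have h3 := (core k hk lam hlampos hlamstrict (Q * U) (Q * V)).2 heq
    have h2 : Q * lrProd k U V * Qᵀ = (Q * U) * dk n k * (Q * V)ᵀ := by
      rw [lrProd_eq]
      simp only [Matrix.transpose_mul, Matrix.mul_assoc]
    have h4 : Q * lrProd k U V * Qᵀ = dk n k := h2.trans h3
    calc lrProd k U V = (Qᵀ * Q) * lrProd k U V * (Qᵀ * Q) := by
          rw [hQtQ, Matrix.one_mul, Matrix.mul_one]
      _ = Qᵀ * (Q * lrProd k U V * Qᵀ) * Q := by
          simp only [Matrix.mul_assoc]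
      _ = Qᵀ * dk n k * Q := by rw [h4]
  have hopt : ∀ (k : ℕ), k ≤ n →
      (∫ x, sqNorm ((lrProd k Qᵀ Qᵀ).mulVec x - x) ∂μ)
        = ∑ j : Fin n, if k ≤ (j : ℕ) then lam j else 0 := by
    intro k hk
    rw [hgval k Qᵀ Qᵀ]
    have h2 : (Q * Qᵀ) * dk n k * (Q * Qᵀ)ᵀ = dk n k := by
      rw [hQQt, Matrix.transpose_one, Matrix.one_mul, Matrix.mul_one]
    rw [h2]
    have h3 : ∀ j : Fin n, sqNorm (fun i => dk n k i j - if i = j then (1:ℝ) else 0)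
        = if k ≤ (j : ℕ) then 1 else 0 := by
      intro j
      by_cases hj : (j : ℕ) < k
      · rw [if_neg (by omega)]
        have h4 : (fun i => dk n k i j - if i = j then (1:ℝ) else 0) = fun _ => 0 := by
          funext i
          simp only [dk, Matrix.diagonal_apply]
          by_cases hij : i = j
          · subst hij; simp [hj]
          · simp [hij]
        rw [h4]
        simp [sqNorm]
      · rw [if_pos (by omega)]
        have h4 : (fun i => dk n k i j - if i = j then (1:ℝ) else 0)
            = fun i => -(if i = j then (1:ℝ) else 0) := by
          funext i
          simp only [dk, Matrix.diagonal_apply]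
          by_cases hij : i = j
          · subst hij; simp [hj]
          · simp [hij]
        rw [h4]
        unfold sqNorm
        have h5 : ∀ i : Fin n, (-(if i = j then (1:ℝ) else 0)) ^ 2
            = if i = j then (1:ℝ) else 0 := by
          intro i; split_ifs <;> norm_num
        rw [Finset.sum_congr rfl fun i _ => h5 i, Finset.sum_ite_eq']
        simp
    rw [Finset.sum_congr rfl fun j _ => by rw [h3 j]]
    apply Finset.sum_congr rfl
    intro j _
    split_ifs <;> ring
  have hintM : ∀ M : Matrix (Fin n) (Fin n) ℝ,
      Integrable (fun x => sqNorm (M.mulVec x - x)) μ := by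
    intro M
    have h1 : (fun x : Fin n → ℝ => sqNorm (M.mulVec x - x))
        = fun x => sqNorm ((M - 1).mulVec x) := by
      funext x; rw [hfun]
    rw [h1]
    exact integrable_sqNorm_mulVec μ hmoment (M - 1)
  have hobj : ∀ U V : Matrix (Fin n) (Fin n) ℝ, idMapObj μ p U V
      = ∑ b : Fin n, p b * ∫ x, sqNorm ((lrProd ((b : ℕ) + 1) U V).mulVec x - x) ∂μ := by
    intro U V
    unfold idMapObj
    rw [integral_finset_sum _ fun b _ => (hintM _).const_mul (p b)]
    apply Finset.sum_congr rfl
    intro b _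
    exact integral_const_mul _ _
  have hoptsum : idMapObj μ p Qᵀ Qᵀ
      = ∑ b : Fin n, p b * ∑ i : Fin n, if (b : ℕ) + 1 ≤ (i : ℕ) then lam i else 0 := by
    rw [hobj]
    apply Finset.sum_congr rfl
    intro b _
    rw [hopt ((b : ℕ) + 1) b.isLt]
  constructor
  · intro U V hmin b
    have hle := hmin Qᵀ Qᵀ
    rw [hoptsum, hobj U V] at hle
    have hterm : ∀ b' ∈ (Finset.univ : Finset (Fin n)),
        p b' * (∑ i : Fin n, if (b' : ℕ) + 1 ≤ (i : ℕ) then lam i else 0)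
          ≤ p b' * ∫ x, sqNorm ((lrProd ((b' : ℕ) + 1) U V).mulVec x - x) ∂μ :=
      fun b' _ => mul_le_mul_of_nonneg_left (hLbound ((b' : ℕ) + 1) b'.isLt U V) (hp b').le
    have hnn : ∀ b' ∈ (Finset.univ : Finset (Fin n)), 0 ≤
        p b' * (∫ x, sqNorm ((lrProd ((b' : ℕ) + 1) U V).mulVec x - x) ∂μ)
          - p b' * (∑ i : Fin n, if (b' : ℕ) + 1 ≤ (i : ℕ) then lam i else 0) :=
      fun b' hb' => sub_nonneg.mpr (hterm b' hb')
    have hsum0 : (∑ b' : Fin n,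
        (p b' * (∫ x, sqNorm ((lrProd ((b' : ℕ) + 1) U V).mulVec x - x) ∂μ)
          - p b' * (∑ i : Fin n, if (b' : ℕ) + 1 ≤ (i : ℕ) then lam i else 0))) = 0 := by
      rw [Finset.sum_sub_distrib]
      have := Finset.sum_le_sum hterm
      linarith
    have hbeq := (Finset.sum_eq_zero_iff_of_nonneg hnn).mp hsum0 b (Finset.mem_univ b)
    have hgeq : (∫ x, sqNorm ((lrProd ((b : ℕ) + 1) U V).mulVec x - x) ∂μ)
        = ∑ i : Fin n, if (b : ℕ) + 1 ≤ (i : ℕ) then lam i else 0 := by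
      have hpne : p b ≠ 0 := ne_of_gt (hp b)
      have : p b * (∫ x, sqNorm ((lrProd ((b : ℕ) + 1) U V).mulVec x - x) ∂μ)
          = p b * (∑ i : Fin n, if (b : ℕ) + 1 ≤ (i : ℕ) then lam i else 0) := by
        linarith
      exact mul_left_cancel₀ hpne this
    rw [hEqCase ((b : ℕ) + 1) b.isLt U V hgeq, hTk]
  · constructor
    · exact ⟨Qᵀ, Qᵀ, hoptsum⟩
    · rintro y ⟨U, V, rfl⟩
      rw [hobj]
      apply Finset.sum_le_sum
      intro b _
      exact mul_le_mul_of_nonneg_left (hLbound ((b : ℕ) + 1) b.isLt U V) (hp b).le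

end
end

section
/- Let Σ ∈ ℝ^{m×n} be rectangular diagonal with diagonal entries σ₁ ≥ … ≥ σ_k > 0 and σ_j = 0 for all j > k (so rank(Σ) = k), let Ṽ ∈ ℝ^{n×n} be orthogonal, let μ be a probability measure on ℝ^n with ∫‖x‖² dμ(x) < ∞, set r = min(m,n), and let p₁,…,p_r > 0 with ∑_b p_b = 1. Write Σ_k = diag(σ₁,…,σ_k) ∈ ℝ^{k×k} and, for z ∈ ℝ^n, let z_{1:k} ∈ ℝ^k denote the vector of its first k coordinates. Then the infimum over U ∈ ℝ^{m×r}, V ∈ ℝ^{n×r} of ∫ ∑_{b=1}^r p_b ‖(U_{:b}V_{:b}ᵀ − Σ) Ṽᵀ x‖² dμ(x) equals the infimum over U' ∈ ℝ^{k×r}, V' ∈ ℝ^{k×r} of ∫ ∑_{b=1}^r p_b ‖(U'_{:b}(V'_{:b})ᵀ − Σ_k) (Ṽᵀ x)_{1:k}‖² dμ(x). -/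
set_option maxHeartbeats 1000000
open Matrix MeasureTheory

noncomputable section

section aux
variable {n : ℕ} {μ : Measure (Fin n → ℝ)}


lemma integrable_dot_sq (hm : Integrable (fun x => ∑ i, x i ^ 2) μ) (a : Fin n → ℝ) :
    Integrable (fun x => (a ⬝ᵥ x) ^ 2) μ := by
  have hcont : Continuous fun x : Fin n → ℝ => (a ⬝ᵥ x) ^ 2 := by
    unfold dotProduct
    exact (continuous_finset_sum _ fun i _ => continuous_const.mul (continuous_apply i)).pow 2
  refine Integrable.mono' (hm.const_mul (∑ i, a i ^ 2)) hcont.aestronglyMeasurable ?_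
  filter_upwards with x
  rw [Real.norm_eq_abs, abs_of_nonneg (sq_nonneg _)]
  exact Finset.sum_mul_sq_le_sq_mul_sq _ _ _

lemma memℒp_dot (hm : Integrable (fun x => ∑ i, x i ^ 2) μ) (a : Fin n → ℝ) :
    MemLp (fun x => a ⬝ᵥ x) 2 μ := by
  have hcont : Continuous fun x : Fin n → ℝ => a ⬝ᵥ x := by
    unfold dotProduct
    exact continuous_finset_sum _ fun i _ => continuous_const.mul (continuous_apply i)
  exact (memLp_two_iff_integrable_sq hcont.aestronglyMeasurable).2 (integrable_dot_sq hm a)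

lemma sum_castLE_eq {M : Type*} [AddCommMonoid M] {k : ℕ} (h : k ≤ n) (f : Fin n → M)
    (h0 : ∀ j : Fin n, k ≤ (j : ℕ) → f j = 0) :
    ∑ j, f j = ∑ s : Fin k, f (Fin.castLE h s) := by
  classical
  have h1 := Finset.sum_map Finset.univ ⟨Fin.castLE h, Fin.castLE_injective h⟩ f
  simp only [Function.Embedding.coeFn_mk] at h1
  rw [← h1]
  refine (Finset.sum_subset (Finset.subset_univ _) ?_).symm
  intro j _ hj
  refine h0 j ?_
  by_contra hlt
  push_neg at hlt
  exact hj (Finset.mem_map.2 ⟨⟨(j : ℕ), hlt⟩, Finset.mem_univ _, by ext; simp⟩)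

lemma sum_castLE_le {k : ℕ} (h : k ≤ n) (f : Fin n → ℝ) (h0 : ∀ j, 0 ≤ f j) :
    ∑ s : Fin k, f (Fin.castLE h s) ≤ ∑ j, f j := by
  classical
  have h1 := Finset.sum_map Finset.univ ⟨Fin.castLE h, Fin.castLE_injective h⟩ f
  simp only [Function.Embedding.coeFn_mk] at h1
  rw [← h1]
  exact Finset.sum_le_sum_of_subset_of_nonneg (Finset.subset_univ _) fun j _ _ => h0 j


lemma obj_repr {r m' : ℕ} (hm : Integrable (fun x => ∑ i, x i ^ 2) μ)
    (p : Fin r → ℝ) (A : Fin r → Matrix (Fin m') (Fin n) ℝ) :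
    ∫ x, ∑ b, p b * sqNorm ((A b).mulVec x) ∂μ
      = ∑ b, p b * ∑ i, ∫ x, ((A b i) ⬝ᵥ x) ^ 2 ∂μ := by
  have hsq : ∀ (b : Fin r) (x : Fin n → ℝ),
      sqNorm ((A b).mulVec x) = ∑ i, ((A b i) ⬝ᵥ x) ^ 2 := fun b x => rfl
  have hint : ∀ b : Fin r, Integrable (fun x => p b * sqNorm ((A b).mulVec x)) μ := by
    intro b
    simp only [hsq]
    exact (integrable_finset_sum _ fun i _ => integrable_dot_sq hm (A b i)).const_mul _
  rw [integral_finset_sum _ fun b _ => hint b]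
  refine Finset.sum_congr rfl fun b _ => ?_
  simp only [hsq]
  rw [integral_const_mul, integral_finset_sum _ fun i _ => integrable_dot_sq hm (A b i)]

variable (μ) in
def Ldot (hm : Integrable (fun x => ∑ i, x i ^ 2) μ) : (Fin n → ℝ) →ₗ[ℝ] Lp ℝ 2 μ where
  toFun a := (memℒp_dot hm a).toLp _
  map_add' a b := by
    rw [← MemLp.toLp_add (memℒp_dot hm a) (memℒp_dot hm b)]
    exact MemLp.toLp_congr _ _ (Filter.Eventually.of_forall fun x => by
      simp [add_dotProduct])
  map_smul' c a := by
    have h := MemLp.toLp_const_smul c (memℒp_dot hm a)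
    rw [RingHom.id_apply, ← h]
    exact MemLp.toLp_congr (memℒp_dot hm (c • a)) ((memℒp_dot hm a).const_smul c)
      (Filter.Eventually.of_forall fun x => by simp [smul_dotProduct, smul_eq_mul])

lemma Ldot_apply (hm : Integrable (fun x => ∑ i, x i ^ 2) μ) (a : Fin n → ℝ) :
    Ldot μ hm a = (memℒp_dot hm a).toLp _ := by
  simp only [Ldot, LinearMap.coe_mk, AddHom.coe_mk]

lemma Ldot_norm_sq (hm : Integrable (fun x => ∑ i, x i ^ 2) μ) (a : Fin n → ℝ) :
    ‖Ldot μ hm a‖ ^ 2 = ∫ x, (a ⬝ᵥ x) ^ 2 ∂μ := by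
  rw [Ldot_apply, ← real_inner_self_eq_norm_sq, MeasureTheory.L2.inner_def]
  refine integral_congr_ae ((MemLp.coeFn_toLp (memℒp_dot hm a)).mono fun x hx => ?_)
  simp only [RCLike.inner_apply, conj_trivial, hx]
  ring


end aux

/-- Let `Σ ∈ ℝ^{m×n}` be rectangular diagonal of rank `k` (diagonal
entries `σ₁ ≥ … ≥ σ_k > 0` and `σ_j = 0` for `j > k`), `Ṽ ∈ ℝ^{n×n}` orthogonal, `μ` a
probability measure with finite second moment, `r = min m n`, and `p_b > 0` with
`∑ p_b = 1`. Writing `Σ_k = diag(σ₁,…,σ_k) ∈ ℝ^{k×k}` and `z_{1:k}` for the first `k`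
coordinates of `z`, the infimum over `U ∈ ℝ^{m×r}, V ∈ ℝ^{n×r}` of
`∫ ∑_b p_b ‖(U_{:b}V_{:b}ᵀ − Σ) Ṽᵀ x‖² dμ` equals the infimum over
`U', V' ∈ ℝ^{k×r}` of `∫ ∑_b p_b ‖(U'_{:b}(V'_{:b})ᵀ − Σ_k) (Ṽᵀ x)_{1:k}‖² dμ`. -/
theorem stmt13 {m n k : ℕ} (hkm : k ≤ m) (hkn : k ≤ n)
    (S : Matrix (Fin m) (Fin n) ℝ)
    (hSdiag : ∀ (i : Fin m) (j : Fin n), (i : ℕ) ≠ (j : ℕ) → S i j = 0)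
    (hSpos : ∀ (i : Fin m) (j : Fin n), (i : ℕ) = (j : ℕ) → (i : ℕ) < k → 0 < S i j)
    (hSzero : ∀ (i : Fin m) (j : Fin n), (i : ℕ) = (j : ℕ) → k ≤ (i : ℕ) → S i j = 0)
    (hSmono : ∀ (i i' : Fin m) (j j' : Fin n), (i : ℕ) = (j : ℕ) → (i' : ℕ) = (j' : ℕ) →
      (i : ℕ) ≤ (i' : ℕ) → S i' j' ≤ S i j)
    (Vt : Matrix (Fin n) (Fin n) ℝ)
    (hVorth : Vtᵀ * Vt = 1) (hVorth' : Vt * Vtᵀ = 1)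
    (μ : Measure (Fin n → ℝ)) [IsProbabilityMeasure μ]
    (hmoment : Integrable (fun x => ∑ i, x i ^ 2) μ)
    (p : Fin (min m n) → ℝ) (hp : ∀ b, 0 < p b) (hpsum : ∑ b, p b = 1)
    (Sk : Matrix (Fin k) (Fin k) ℝ)
    (hSk : ∀ (i j : Fin k), Sk i j = S (Fin.castLE hkm i) (Fin.castLE hkn j)) :
    (⨅ UV : Matrix (Fin m) (Fin (min m n)) ℝ × Matrix (Fin n) (Fin (min m n)) ℝ,
      ∫ x, ∑ b : Fin (min m n),
        p b * sqNorm ((lrProd ((b : ℕ) + 1) UV.1 UV.2 - S).mulVec (Vtᵀ.mulVec x)) ∂μ) =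
    (⨅ UV : Matrix (Fin k) (Fin (min m n)) ℝ × Matrix (Fin k) (Fin (min m n)) ℝ,
      ∫ x, ∑ b : Fin (min m n),
        p b * sqNorm ((lrProd ((b : ℕ) + 1) UV.1 UV.2 - Sk).mulVec
          (fun i : Fin k => Vtᵀ.mulVec x (Fin.castLE hkn i))) ∂μ) := by
  classical
  set Vk : Matrix (Fin k) (Fin n) ℝ := Vtᵀ.submatrix (Fin.castLE hkn) id with hVkdef
  -- integral representations
  have reprL : ∀ (U : Matrix (Fin m) (Fin (min m n)) ℝ) (V : Matrix (Fin n) (Fin (min m n)) ℝ),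
      (∫ x, ∑ b : Fin (min m n),
          p b * sqNorm ((lrProd ((b : ℕ) + 1) U V - S).mulVec (Vtᵀ.mulVec x)) ∂μ)
      = ∑ b : Fin (min m n), p b * ∑ i : Fin m,
          ∫ x, ((((lrProd ((b : ℕ) + 1) U V - S) * Vtᵀ) i) ⬝ᵥ x) ^ 2 ∂μ := by
    intro U V
    rw [← obj_repr hmoment p (fun b => (lrProd ((b : ℕ) + 1) U V - S) * Vtᵀ)]
    refine integral_congr_ae (Filter.Eventually.of_forall fun x => ?_)
    simp only [Matrix.mulVec_mulVec]
  have reprR : ∀ (U V : Matrix (Fin k) (Fin (min m n)) ℝ),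
      (∫ x, ∑ b : Fin (min m n),
          p b * sqNorm ((lrProd ((b : ℕ) + 1) U V - Sk).mulVec
            (fun i : Fin k => Vtᵀ.mulVec x (Fin.castLE hkn i))) ∂μ)
      = ∑ b : Fin (min m n), p b * ∑ i : Fin k,
          ∫ x, ((((lrProd ((b : ℕ) + 1) U V - Sk) * Vk) i) ⬝ᵥ x) ^ 2 ∂μ := by
    intro U V
    rw [← obj_repr hmoment p (fun b => (lrProd ((b : ℕ) + 1) U V - Sk) * Vk)]
    refine integral_congr_ae (Filter.Eventually.of_forall fun x => ?_)
    have hv : (fun i : Fin k => Vtᵀ.mulVec x (Fin.castLE hkn i)) = Vk.mulVec x := rfl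
    simp only [hv, Matrix.mulVec_mulVec]
  -- boundedness below
  have hbddL : BddBelow (Set.range fun UV : Matrix (Fin m) (Fin (min m n)) ℝ ×
      Matrix (Fin n) (Fin (min m n)) ℝ =>
      ∫ x, ∑ b : Fin (min m n),
        p b * sqNorm ((lrProd ((b : ℕ) + 1) UV.1 UV.2 - S).mulVec (Vtᵀ.mulVec x)) ∂μ) := by
    refine ⟨0, ?_⟩
    rintro v ⟨UV, rfl⟩
    refine integral_nonneg fun x => Finset.sum_nonneg fun b _ => mul_nonneg (hp b).le ?_
    exact Finset.sum_nonneg fun i _ => sq_nonneg _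
  have hbddR : BddBelow (Set.range fun UV : Matrix (Fin k) (Fin (min m n)) ℝ ×
      Matrix (Fin k) (Fin (min m n)) ℝ =>
      ∫ x, ∑ b : Fin (min m n),
        p b * sqNorm ((lrProd ((b : ℕ) + 1) UV.1 UV.2 - Sk).mulVec
          (fun i : Fin k => Vtᵀ.mulVec x (Fin.castLE hkn i))) ∂μ) := by
    refine ⟨0, ?_⟩
    rintro v ⟨UV, rfl⟩
    refine integral_nonneg fun x => Finset.sum_nonneg fun b _ => mul_nonneg (hp b).le ?_
    exact Finset.sum_nonneg fun i _ => sq_nonneg _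
  refine le_antisymm ?_ ?_
  · -- LHS ≤ RHS : embed k-sized factors by zero padding
    refine le_ciInf fun UV' => ?_
    obtain ⟨U', V'⟩ := UV'
    set U : Matrix (Fin m) (Fin (min m n)) ℝ :=
      Matrix.of (fun i t => if h : (i : ℕ) < k then U' ⟨i, h⟩ t else 0) with hUdef
    set V : Matrix (Fin n) (Fin (min m n)) ℝ :=
      Matrix.of (fun j t => if h : (j : ℕ) < k then V' ⟨j, h⟩ t else 0) with hVdef
    have hUtop : ∀ (i : Fin k) t, U (Fin.castLE hkm i) t = U' i t := by
      intro i t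
      have h : ((Fin.castLE hkm i : Fin m) : ℕ) < k := i.isLt
      simp [hUdef, Fin.eta]
    have hVtop : ∀ (j : Fin k) t, V (Fin.castLE hkn j) t = V' j t := by
      intro j t
      have h : ((Fin.castLE hkn j : Fin n) : ℕ) < k := j.isLt
      simp [hVdef, Fin.eta]
    have hUbot : ∀ (i : Fin m), k ≤ (i : ℕ) → ∀ t, U i t = 0 := by
      intro i hi t
      simp only [hUdef, Matrix.of_apply, dif_neg (not_lt.2 hi)]
    have hVbot : ∀ (j : Fin n), k ≤ (j : ℕ) → ∀ t, V j t = 0 := by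
      intro j hj t
      simp only [hVdef, Matrix.of_apply, dif_neg (not_lt.2 hj)]
    refine le_trans (ciInf_le hbddL (U, V)) (le_of_eq ?_)
    show (∫ x, ∑ b : Fin (min m n),
        p b * sqNorm ((lrProd ((b : ℕ) + 1) U V - S).mulVec (Vtᵀ.mulVec x)) ∂μ) = _
    rw [reprL U V, reprR U' V']
    refine Finset.sum_congr rfl fun b _ => ?_
    congr 1
    -- rows with index ≥ k vanish
    have hM0 : ∀ (i : Fin m), k ≤ (i : ℕ) → ∀ j, (lrProd ((b : ℕ) + 1) U V - S) i j = 0 := by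
      intro i hi j
      have h1 : lrProd ((b : ℕ) + 1) U V i j = 0 := by
        simp only [lrProd, Matrix.of_apply]
        refine Finset.sum_eq_zero fun t _ => ?_
        rw [hUbot i hi t, zero_mul, ite_self]
      have h2 : S i j = 0 := by
        by_cases h : (i : ℕ) = (j : ℕ)
        · exact hSzero i j h hi
        · exact hSdiag i j h
      simp [Matrix.sub_apply, h1, h2]
    have hMtop0 : ∀ (i : Fin k) (j : Fin n), k ≤ (j : ℕ) →
        (lrProd ((b : ℕ) + 1) U V - S) (Fin.castLE hkm i) j = 0 := by
      intro i j hj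
      have h1 : lrProd ((b : ℕ) + 1) U V (Fin.castLE hkm i) j = 0 := by
        simp only [lrProd, Matrix.of_apply]
        refine Finset.sum_eq_zero fun t _ => ?_
        rw [hVbot j hj t, mul_zero, ite_self]
      have h2 : S (Fin.castLE hkm i) j = 0 := by
        refine hSdiag _ _ ?_
        simp only [Fin.coe_castLE]
        have := i.isLt
        omega
      simp [Matrix.sub_apply, h1, h2]
    have hMeq : ∀ (i s : Fin k),
        (lrProd ((b : ℕ) + 1) U V - S) (Fin.castLE hkm i) (Fin.castLE hkn s)
          = (lrProd ((b : ℕ) + 1) U' V' - Sk) i s := by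
      intro i s
      simp only [Matrix.sub_apply, lrProd, Matrix.of_apply]
      rw [hSk i s]
      congr 1
      refine Finset.sum_congr rfl fun t _ => ?_
      rw [hUtop i t, hVtop s t]
    -- reduce the sum over Fin m to a sum over Fin k
    rw [sum_castLE_eq hkm
      (fun i => ∫ x, ((((lrProd ((b : ℕ) + 1) U V - S) * Vtᵀ) i) ⬝ᵥ x) ^ 2 ∂μ) ?_]
    · refine Finset.sum_congr rfl fun i _ => ?_
      have hrow : ((lrProd ((b : ℕ) + 1) U V - S) * Vtᵀ) (Fin.castLE hkm i)
          = ((lrProd ((b : ℕ) + 1) U' V' - Sk) * Vk) i := by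
        funext l
        simp only [Matrix.mul_apply]
        rw [sum_castLE_eq hkn
          (fun j => (lrProd ((b : ℕ) + 1) U V - S) (Fin.castLE hkm i) j * Vtᵀ j l)
          (fun j hj => by simp only [hMtop0 i j hj, zero_mul])]
        refine Finset.sum_congr rfl fun s _ => ?_
        rw [hMeq i s]
        rfl
      rw [hrow]
    · intro i hi
      have hrow0 : ((lrProd ((b : ℕ) + 1) U V - S) * Vtᵀ) i = 0 := by
        funext l
        simp only [Matrix.mul_apply]
        exact Finset.sum_eq_zero fun j _ => by rw [hM0 i hi j, zero_mul]
      simp only [hrow0]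
      simp
  · -- RHS ≤ LHS : project onto the span of the first k coordinates
    refine le_ciInf fun UV => ?_
    set L := Ldot μ hmoment with hLdef
    set e : Fin n → Lp ℝ 2 μ := fun j => L (Vtᵀ j) with hedef
    set F : Submodule ℝ (Lp ℝ 2 μ) :=
      Submodule.span ℝ (Set.range fun s : Fin k => e (Fin.castLE hkn s)) with hFdef
    haveI : FiniteDimensional ℝ F := FiniteDimensional.span_of_finite ℝ (Set.finite_range _)
    have hrep : ∀ j : Fin n, ∃ c : Fin k → ℝ,
        ∑ s, c s • e (Fin.castLE hkn s) = (Submodule.orthogonalProjectionOnto F (e j) : Lp ℝ 2 μ) := by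
      intro j
      exact (Submodule.mem_span_range_iff_exists_fun ℝ).1 (Submodule.orthogonalProjectionOnto F (e j)).2
    choose C hC using hrep
    set U' : Matrix (Fin k) (Fin (min m n)) ℝ :=
      Matrix.of (fun i t => UV.1 (Fin.castLE hkm i) t) with hU'def
    set V' : Matrix (Fin k) (Fin (min m n)) ℝ :=
      Matrix.of (fun s t => ∑ j, C j s * UV.2 j t) with hV'def
    refine le_trans (ciInf_le hbddR (U', V')) ?_
    show (∫ x, ∑ b : Fin (min m n),
        p b * sqNorm ((lrProd ((b : ℕ) + 1) U' V' - Sk).mulVec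
          (fun i : Fin k => Vtᵀ.mulVec x (Fin.castLE hkn i))) ∂μ) ≤ _
    rw [reprR U' V', reprL UV.1 UV.2]
    refine Finset.sum_le_sum fun b _ => mul_le_mul_of_nonneg_left ?_ (hp b).le
    -- key: each row on the right is the orthogonal projection of the corresponding left row
    have key : ∀ i : Fin k,
        L (((lrProd ((b : ℕ) + 1) U' V' - Sk) * Vk) i)
          = (Submodule.orthogonalProjectionOnto F
              (L (((lrProd ((b : ℕ) + 1) UV.1 UV.2 - S) * Vtᵀ) (Fin.castLE hkm i)))
              : Lp ℝ 2 μ) := by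
      intro i
      have hrowL : ((lrProd ((b : ℕ) + 1) UV.1 UV.2 - S) * Vtᵀ) (Fin.castLE hkm i)
          = ∑ j, (lrProd ((b : ℕ) + 1) UV.1 UV.2 - S) (Fin.castLE hkm i) j • Vtᵀ j := by
        funext l
        simp [Matrix.mul_apply, Finset.sum_apply, Pi.smul_apply, smul_eq_mul]
      have hrowR : ((lrProd ((b : ℕ) + 1) U' V' - Sk) * Vk) i
          = ∑ s, (lrProd ((b : ℕ) + 1) U' V' - Sk) i s • Vtᵀ (Fin.castLE hkn s) := by
        funext l
        simp [Matrix.mul_apply, Finset.sum_apply, Pi.smul_apply, smul_eq_mul, hVkdef,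
          Matrix.submatrix_apply]
      have he : ∀ j, e j = L (Vtᵀ j) := fun j => rfl
      have hsub : ∀ j : Fin n, ((Submodule.orthogonalProjectionOnto F (e j)) : Lp ℝ 2 μ)
          = ∑ s, C j s • e (Fin.castLE hkn s) := fun j => (hC j).symm
      rw [hrowL, hrowR]
      simp only [map_sum, _root_.map_smul, Submodule.coe_sum, Submodule.coe_smul, ← he]
      simp only [hsub]
      -- exchange sums on the right-hand side
      simp only [Finset.smul_sum, smul_smul]
      rw [Finset.sum_comm]
      simp only [← Finset.sum_smul]
      -- compute the coefficient
      have fA : ∀ s : Fin k,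
          (∑ j, (lrProd ((b : ℕ) + 1) UV.1 UV.2 - S) (Fin.castLE hkm i) j * C j s)
            = lrProd ((b : ℕ) + 1) U' V' i s - Sk i i * C (Fin.castLE hkn i) s := by
        intro s
        simp only [Matrix.sub_apply, sub_mul, Finset.sum_sub_distrib]
        congr 1
        · simp only [lrProd, Matrix.of_apply, Finset.sum_mul]
          rw [Finset.sum_comm]
          refine Finset.sum_congr rfl fun t _ => ?_
          by_cases hc : (t : ℕ) < (b : ℕ) + 1
          · simp only [if_pos hc, hU'def, hV'def, Matrix.of_apply, Finset.mul_sum]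
            exact Finset.sum_congr rfl fun j _ => by ring
          · simp [hc]
        · rw [Finset.sum_eq_single (Fin.castLE hkn i)]
          · rw [← hSk i i]
          · intro j _ hj
            rw [hSdiag _ _ ?_, zero_mul]
            simp only [Fin.coe_castLE]
            exact fun hh => hj (Fin.ext hh.symm)
          · intro habs
            exact absurd (Finset.mem_univ _) habs
        -- done fA
      have fB : ∑ s, C (Fin.castLE hkn i) s • e (Fin.castLE hkn s)
          = e (Fin.castLE hkn i) := by
        rw [hC (Fin.castLE hkn i)]
        refine Submodule.starProjection_eq_self_iff.2 ?_
        rw [hFdef]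
        exact Submodule.subset_span ⟨i, rfl⟩
      simp only [fA]
      simp only [Matrix.sub_apply, sub_smul, Finset.sum_sub_distrib]
      congr 1
      -- remaining: ∑ s, Sk i s • e' s = ∑ s, (Sk i i * C i₀ s) • e' s
      rw [Finset.sum_eq_single i]
      · simp only [mul_smul]
        rw [← Finset.smul_sum, fB]
      · intro s _ hs
        rw [show Sk i s = 0 from ?_, zero_smul]
        rw [hSk i s]
        refine hSdiag _ _ ?_
        simp only [Fin.coe_castLE]
        exact fun hh => hs (Fin.ext hh.symm)
      · intro habs
        exact absurd (Finset.mem_univ _) habs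
    -- use the key to compare the sums
    refine le_trans (Finset.sum_le_sum fun i _ => ?_)
      (sum_castLE_le hkm _ fun j => integral_nonneg fun x => sq_nonneg _)
    rw [← Ldot_norm_sq hmoment, ← Ldot_norm_sq hmoment, ← hLdef]
    have hnorm : ‖L (((lrProd ((b : ℕ) + 1) U' V' - Sk) * Vk) i)‖
        ≤ ‖L (((lrProd ((b : ℕ) + 1) UV.1 UV.2 - S) * Vtᵀ) (Fin.castLE hkm i))‖ := by
      rw [key i]
      calc ‖((Submodule.orthogonalProjectionOnto F
            (L (((lrProd ((b : ℕ) + 1) UV.1 UV.2 - S) * Vtᵀ) (Fin.castLE hkm i))))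
            : Lp ℝ 2 μ)‖
          ≤ ‖Submodule.orthogonalProjectionOnto F‖ *
            ‖L (((lrProd ((b : ℕ) + 1) UV.1 UV.2 - S) * Vtᵀ) (Fin.castLE hkm i))‖ :=
            (Submodule.orthogonalProjectionOnto F).le_opNorm _
        _ ≤ 1 * ‖L (((lrProd ((b : ℕ) + 1) UV.1 UV.2 - S) * Vtᵀ) (Fin.castLE hkm i))‖ :=
            mul_le_mul_of_nonneg_right (Submodule.orthogonalProjectionOnto_norm_le F) (norm_nonneg _)
        _ = _ := one_mul _
    exact pow_le_pow_left₀ (norm_nonneg _) hnorm 2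

end
end
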